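/- The six canonical three-qubit states e₁⊗e₁⊗e₁; e₁⊗e₁⊗e₁ + e₁⊗e₂⊗e₂; e₁⊗e₁⊗e₁ + e₂⊗e₁⊗e₂; e₁⊗e₁⊗e₁ + e₂⊗e₂⊗e₁; e₁⊗e₁⊗e₁ + e₂⊗e₂⊗e₂; and e₁⊗e₁⊗e₂ + e₁⊗e₂⊗e₁ + e₂⊗e₁⊗e₁ are pairwise SLOCC-inequivalent: for any two distinct states Φ₁, Φ₂ from this list there exist no invertible linear maps F¹, F², F³ on ℂ² with (F¹ ⊗ F² ⊗ F³)(Φ₁) = Φ₂. -/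

import Mathlib

open scoped TensorProduct

/-- The standard basis vectors of `ℂ²` (`e 0 = e₁`, `e 1 = e₂`). -/
noncomputable def e (i : Fin 2) : Fin 2 → ℂ := Pi.single i 1

/-- The space of three qubits, `ℂ² ⊗ ℂ² ⊗ ℂ²`. -/
abbrev Qubit3 := (Fin 2 → ℂ) ⊗[ℂ] ((Fin 2 → ℂ) ⊗[ℂ] (Fin 2 → ℂ))

/-- The action of a triple of linear maps on the three-qubit space. -/
noncomputable def map3 (F1 F2 F3 : (Fin 2 → ℂ) →ₗ[ℂ] (Fin 2 → ℂ)) :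
    Qubit3 →ₗ[ℂ] Qubit3 :=
  TensorProduct.map F1 (TensorProduct.map F2 F3)

/-- The six canonical three-qubit states:
000, 0₁Ψ⁺₂₃, 0₂Ψ⁺₁₃, 0₃Ψ⁺₁₂, GHZ and W. -/
noncomputable def canonical3 : Fin 6 → Qubit3 :=
  ![e 0 ⊗ₜ[ℂ] (e 0 ⊗ₜ[ℂ] e 0),
    e 0 ⊗ₜ[ℂ] (e 0 ⊗ₜ[ℂ] e 0) + e 0 ⊗ₜ[ℂ] (e 1 ⊗ₜ[ℂ] e 1),
    e 0 ⊗ₜ[ℂ] (e 0 ⊗ₜ[ℂ] e 0) + e 1 ⊗ₜ[ℂ] (e 0 ⊗ₜ[ℂ] e 1),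
    e 0 ⊗ₜ[ℂ] (e 0 ⊗ₜ[ℂ] e 0) + e 1 ⊗ₜ[ℂ] (e 1 ⊗ₜ[ℂ] e 0),
    e 0 ⊗ₜ[ℂ] (e 0 ⊗ₜ[ℂ] e 0) + e 1 ⊗ₜ[ℂ] (e 1 ⊗ₜ[ℂ] e 1),
    e 0 ⊗ₜ[ℂ] (e 0 ⊗ₜ[ℂ] e 1) + e 0 ⊗ₜ[ℂ] (e 1 ⊗ₜ[ℂ] e 0) + e 1 ⊗ₜ[ℂ] (e 0 ⊗ₜ[ℂ] e 0)]

/-! ### Auxiliary machinery -/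

/-- Coordinate functional on `ℂ² ⊗ ℂ²`. -/
noncomputable def κ2 (b c : Fin 2) : ((Fin 2 → ℂ) ⊗[ℂ] (Fin 2 → ℂ)) →ₗ[ℂ] ℂ :=
  TensorProduct.lift (LinearMap.mk₂ ℂ (fun v w => v b * w c)
    (fun v v' w => by simp [add_mul])
    (fun r v w => by simp [smul_eq_mul]; ring)
    (fun v w w' => by simp [mul_add])
    (fun r v w => by simp [smul_eq_mul]; ring))

/-- Coordinate functional on the three-qubit space. -/
noncomputable def κ (a b c : Fin 2) : Qubit3 →ₗ[ℂ] ℂ :=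
  TensorProduct.lift (LinearMap.mk₂ ℂ (fun v y => v a * κ2 b c y)
    (fun v v' y => by simp [add_mul])
    (fun r v y => by simp [smul_eq_mul]; ring)
    (fun v y y' => by simp [mul_add])
    (fun r v y => by simp [smul_eq_mul]; ring))

@[simp] lemma κ_tmul (a b c : Fin 2) (u v w : Fin 2 → ℂ) :
    κ a b c (u ⊗ₜ[ℂ] (v ⊗ₜ[ℂ] w)) = u a * (v b * w c) := by
  simp [κ, κ2]

@[simp] lemma map3_tmul (F1 F2 F3 : (Fin 2 → ℂ) →ₗ[ℂ] (Fin 2 → ℂ)) (u v w : Fin 2 → ℂ) :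
    map3 F1 F2 F3 (u ⊗ₜ[ℂ] (v ⊗ₜ[ℂ] w)) = F1 u ⊗ₜ[ℂ] (F2 v ⊗ₜ[ℂ] F3 w) := by
  simp [map3]

@[simp] lemma e_same (i : Fin 2) : e i i = 1 := by simp [e]
@[simp] lemma e_01 : e 0 1 = 0 := by simp [e, Pi.single_apply]
@[simp] lemma e_10 : e 1 0 = 0 := by simp [e, Pi.single_apply]

lemma c0 : canonical3 0 = e 0 ⊗ₜ[ℂ] (e 0 ⊗ₜ[ℂ] e 0) := rfl
lemma c1 : canonical3 1 = e 0 ⊗ₜ[ℂ] (e 0 ⊗ₜ[ℂ] e 0) + e 0 ⊗ₜ[ℂ] (e 1 ⊗ₜ[ℂ] e 1) := rfl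
lemma c2 : canonical3 2 = e 0 ⊗ₜ[ℂ] (e 0 ⊗ₜ[ℂ] e 0) + e 1 ⊗ₜ[ℂ] (e 0 ⊗ₜ[ℂ] e 1) := rfl
lemma c3 : canonical3 3 = e 0 ⊗ₜ[ℂ] (e 0 ⊗ₜ[ℂ] e 0) + e 1 ⊗ₜ[ℂ] (e 1 ⊗ₜ[ℂ] e 0) := rfl
lemma c4 : canonical3 4 = e 0 ⊗ₜ[ℂ] (e 0 ⊗ₜ[ℂ] e 0) + e 1 ⊗ₜ[ℂ] (e 1 ⊗ₜ[ℂ] e 1) := rfl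
lemma c5 : canonical3 5 = e 0 ⊗ₜ[ℂ] (e 0 ⊗ₜ[ℂ] e 1) + e 0 ⊗ₜ[ℂ] (e 1 ⊗ₜ[ℂ] e 0)
    + e 1 ⊗ₜ[ℂ] (e 0 ⊗ₜ[ℂ] e 0) := rfl

/-- Composing with the inverses gives the identity. -/
lemma map3_comp_symm (F1 F2 F3 : (Fin 2 → ℂ) ≃ₗ[ℂ] (Fin 2 → ℂ)) :
    (map3 F1.symm.toLinearMap F2.symm.toLinearMap F3.symm.toLinearMap) ∘ₗ
      (map3 F1.toLinearMap F2.toLinearMap F3.toLinearMap) = LinearMap.id := by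
  have hc : ∀ (G : (Fin 2 → ℂ) ≃ₗ[ℂ] (Fin 2 → ℂ)),
      G.symm.toLinearMap ∘ₗ G.toLinearMap = LinearMap.id :=
    fun G => LinearMap.ext fun v => G.symm_apply_apply v
  unfold map3
  rw [← TensorProduct.map_comp, ← TensorProduct.map_comp, hc, hc, hc,
    TensorProduct.map_id, TensorProduct.map_id]

/-- SLOCC equivalence is symmetric. -/
lemma slocc_flip {x y : Qubit3}
    (h : ∃ F1 F2 F3 : (Fin 2 → ℂ) ≃ₗ[ℂ] (Fin 2 → ℂ),
      map3 F1.toLinearMap F2.toLinearMap F3.toLinearMap x = y) :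
    ∃ F1 F2 F3 : (Fin 2 → ℂ) ≃ₗ[ℂ] (Fin 2 → ℂ),
      map3 F1.toLinearMap F2.toLinearMap F3.toLinearMap y = x := by
  obtain ⟨F1, F2, F3, h⟩ := h
  refine ⟨F1.symm, F2.symm, F3.symm, ?_⟩
  rw [← h, ← LinearMap.comp_apply, map3_comp_symm]
  rfl

/-- An invertible linear map on `ℂ²` has nonzero determinant (in coordinates). -/
lemma det_ne (F : (Fin 2 → ℂ) ≃ₗ[ℂ] (Fin 2 → ℂ)) :
    F (e 0) 0 * F (e 1) 1 - F (e 1) 0 * F (e 0) 1 ≠ 0 := by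
  have hM : ∀ i j : Fin 2, LinearMap.toMatrix' F.toLinearMap i j = F (e j) i := by
    intro i j
    rw [LinearMap.toMatrix'_apply]
    have : (fun k => if k = j then (1:ℂ) else 0) = e j := by
      ext k; simp [e, Pi.single_apply]
    rfl
  have hu : IsUnit (LinearMap.toMatrix' F.toLinearMap).det := by
    rw [LinearMap.det_toMatrix']
    exact F.isUnit_det'
  rw [Matrix.det_fin_two, hM, hM, hM, hM] at hu
  intro h
  rw [sub_eq_zero] at h
  rw [show F (e 0) 0 * F (e 1) 1 = F (e 1) 0 * F (e 0) 1 from h] at hu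
  simp at hu

/-- Cayley's hyperdeterminant of a rank-≤2 tensor is the square of the product
of the determinants. -/
lemma hyperdet_key (a0 a1 a2 a3 b0 b1 b2 b3 c0 c1 c2 c3 : ℂ)
    (x0 x1 x2 x3 x4 x5 x6 x7 : ℂ)
    (h0 : x0 = a0*(b0*c0) + a1*(b1*c1))
    (h1 : x1 = a0*(b0*c2) + a1*(b1*c3))
    (h2 : x2 = a0*(b2*c0) + a1*(b3*c1))
    (h3 : x3 = a0*(b2*c2) + a1*(b3*c3))
    (h4 : x4 = a2*(b0*c0) + a3*(b1*c1))
    (h5 : x5 = a2*(b0*c2) + a3*(b1*c3))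
    (h6 : x6 = a2*(b2*c0) + a3*(b3*c1))
    (h7 : x7 = a2*(b2*c2) + a3*(b3*c3)) :
    x0^2*x7^2 + x1^2*x6^2 + x2^2*x5^2 + x3^2*x4^2
      - 2*(x0*x1*x6*x7 + x0*x2*x5*x7 + x0*x3*x4*x7 + x1*x2*x5*x6 + x1*x3*x4*x6 + x2*x3*x4*x5)
      + 4*(x0*x3*x5*x6 + x1*x2*x4*x7)
    = ((a0*a3 - a1*a2)*(b0*b3 - b1*b2)*(c0*c3 - c1*c2))^2 := by
  subst h0 h1 h2 h3 h4 h5 h6 h7; ring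

/-! ### The fifteen individual inequivalences -/

section Cases
variable (F1 F2 F3 : (Fin 2 → ℂ) ≃ₗ[ℂ] (Fin 2 → ℂ))

lemma L01 : ¬ ∃ F1 F2 F3 : (Fin 2 → ℂ) ≃ₗ[ℂ] (Fin 2 → ℂ),
    map3 F1.toLinearMap F2.toLinearMap F3.toLinearMap (canonical3 0) = canonical3 1 := by
  rintro ⟨F1, F2, F3, h⟩
  rw [c0, c1] at h
  have E000 := congrArg (κ 0 0 0) h; simp at E000
  have E001 := congrArg (κ 0 0 1) h; simp at E001
  have E011 := congrArg (κ 0 1 1) h; simp at E011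
  rcases E001 with hp | hq | hr
  · simp [hp] at E000
  · simp [hq] at E000
  · simp [hr] at E011

lemma L02 : ¬ ∃ F1 F2 F3 : (Fin 2 → ℂ) ≃ₗ[ℂ] (Fin 2 → ℂ),
    map3 F1.toLinearMap F2.toLinearMap F3.toLinearMap (canonical3 0) = canonical3 2 := by
  rintro ⟨F1, F2, F3, h⟩
  rw [c0, c2] at h
  have E000 := congrArg (κ 0 0 0) h; simp at E000
  have E001 := congrArg (κ 0 0 1) h; simp at E001
  have E101 := congrArg (κ 1 0 1) h; simp at E101
  rcases E001 with hp | hq | hr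
  · simp [hp] at E000
  · simp [hq] at E000
  · simp [hr] at E101

lemma L03 : ¬ ∃ F1 F2 F3 : (Fin 2 → ℂ) ≃ₗ[ℂ] (Fin 2 → ℂ),
    map3 F1.toLinearMap F2.toLinearMap F3.toLinearMap (canonical3 0) = canonical3 3 := by
  rintro ⟨F1, F2, F3, h⟩
  rw [c0, c3] at h
  have E000 := congrArg (κ 0 0 0) h; simp at E000
  have E010 := congrArg (κ 0 1 0) h; simp at E010
  have E110 := congrArg (κ 1 1 0) h; simp at E110
  rcases E010 with hp | hq | hr
  · simp [hp] at E000
  · simp [hq] at E110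
  · simp [hr] at E000

lemma L04 : ¬ ∃ F1 F2 F3 : (Fin 2 → ℂ) ≃ₗ[ℂ] (Fin 2 → ℂ),
    map3 F1.toLinearMap F2.toLinearMap F3.toLinearMap (canonical3 0) = canonical3 4 := by
  rintro ⟨F1, F2, F3, h⟩
  rw [c0, c4] at h
  have E000 := congrArg (κ 0 0 0) h; simp at E000
  have E001 := congrArg (κ 0 0 1) h; simp at E001
  have E111 := congrArg (κ 1 1 1) h; simp at E111
  rcases E001 with hp | hq | hr
  · simp [hp] at E000
  · simp [hq] at E000
  · simp [hr] at E111

lemma L05 : ¬ ∃ F1 F2 F3 : (Fin 2 → ℂ) ≃ₗ[ℂ] (Fin 2 → ℂ),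
    map3 F1.toLinearMap F2.toLinearMap F3.toLinearMap (canonical3 0) = canonical3 5 := by
  rintro ⟨F1, F2, F3, h⟩
  rw [c0, c5] at h
  have E000 := congrArg (κ 0 0 0) h; simp at E000
  have E001 := congrArg (κ 0 0 1) h; simp at E001
  have E010 := congrArg (κ 0 1 0) h; simp at E010
  rcases E000 with hp | hq | hr
  · simp [hp] at E001
  · simp [hq] at E001
  · simp [hr] at E010

lemma L12 : ¬ ∃ F1 F2 F3 : (Fin 2 → ℂ) ≃ₗ[ℂ] (Fin 2 → ℂ),
    map3 F1.toLinearMap F2.toLinearMap F3.toLinearMap (canonical3 1) = canonical3 2 := by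
  rintro ⟨F1, F2, F3, h⟩
  rw [c1, c2] at h
  have E000 := congrArg (κ 0 0 0) h; simp at E000
  have E100 := congrArg (κ 1 0 0) h; simp at E100
  have E101 := congrArg (κ 1 0 1) h; simp at E101
  have h0 : F1 (e 0) 1 * (F2 (e 0) 0 * F3 (e 0) 0 + F2 (e 1) 0 * F3 (e 1) 0) = 0 := by
    linear_combination E100
  rcases mul_eq_zero.mp h0 with hp | hY
  · simp [hp] at E101
  · exact zero_ne_one (show (0:ℂ) = 1 by linear_combination E000 - F1 (e 0) 0 * hY)

lemma L13 : ¬ ∃ F1 F2 F3 : (Fin 2 → ℂ) ≃ₗ[ℂ] (Fin 2 → ℂ),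
    map3 F1.toLinearMap F2.toLinearMap F3.toLinearMap (canonical3 1) = canonical3 3 := by
  rintro ⟨F1, F2, F3, h⟩
  rw [c1, c3] at h
  have E000 := congrArg (κ 0 0 0) h; simp at E000
  have E100 := congrArg (κ 1 0 0) h; simp at E100
  have E110 := congrArg (κ 1 1 0) h; simp at E110
  have h0 : F1 (e 0) 1 * (F2 (e 0) 0 * F3 (e 0) 0 + F2 (e 1) 0 * F3 (e 1) 0) = 0 := by
    linear_combination E100
  rcases mul_eq_zero.mp h0 with hp | hY
  · simp [hp] at E110
  · exact zero_ne_one (show (0:ℂ) = 1 by linear_combination E000 - F1 (e 0) 0 * hY)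

lemma L14 : ¬ ∃ F1 F2 F3 : (Fin 2 → ℂ) ≃ₗ[ℂ] (Fin 2 → ℂ),
    map3 F1.toLinearMap F2.toLinearMap F3.toLinearMap (canonical3 1) = canonical3 4 := by
  rintro ⟨F1, F2, F3, h⟩
  rw [c1, c4] at h
  have E000 := congrArg (κ 0 0 0) h; simp at E000
  have E100 := congrArg (κ 1 0 0) h; simp at E100
  have E111 := congrArg (κ 1 1 1) h; simp at E111
  have h0 : F1 (e 0) 1 * (F2 (e 0) 0 * F3 (e 0) 0 + F2 (e 1) 0 * F3 (e 1) 0) = 0 := by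
    linear_combination E100
  rcases mul_eq_zero.mp h0 with hp | hY
  · simp [hp] at E111
  · exact zero_ne_one (show (0:ℂ) = 1 by linear_combination E000 - F1 (e 0) 0 * hY)

lemma L15 : ¬ ∃ F1 F2 F3 : (Fin 2 → ℂ) ≃ₗ[ℂ] (Fin 2 → ℂ),
    map3 F1.toLinearMap F2.toLinearMap F3.toLinearMap (canonical3 1) = canonical3 5 := by
  rintro ⟨F1, F2, F3, h⟩
  rw [c1, c5] at h
  have E000 := congrArg (κ 0 0 0) h; simp at E000
  have E001 := congrArg (κ 0 0 1) h; simp at E001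
  have E100 := congrArg (κ 1 0 0) h; simp at E100
  have h0 : F1 (e 0) 0 * (F2 (e 0) 0 * F3 (e 0) 0 + F2 (e 1) 0 * F3 (e 1) 0) = 0 := by
    linear_combination E000
  rcases mul_eq_zero.mp h0 with hp | hY
  · simp [hp] at E001
  · exact zero_ne_one (show (0:ℂ) = 1 by linear_combination E100 - F1 (e 0) 1 * hY)

lemma L23 : ¬ ∃ F1 F2 F3 : (Fin 2 → ℂ) ≃ₗ[ℂ] (Fin 2 → ℂ),
    map3 F1.toLinearMap F2.toLinearMap F3.toLinearMap (canonical3 2) = canonical3 3 := by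
  rintro ⟨F1, F2, F3, h⟩
  rw [c2, c3] at h
  have E000 := congrArg (κ 0 0 0) h; simp at E000
  have E010 := congrArg (κ 0 1 0) h; simp at E010
  have E110 := congrArg (κ 1 1 0) h; simp at E110
  have h0 : F2 (e 0) 1 * (F1 (e 0) 0 * F3 (e 0) 0 + F1 (e 1) 0 * F3 (e 1) 0) = 0 := by
    linear_combination E010
  rcases mul_eq_zero.mp h0 with hq | hZ
  · simp [hq] at E110
  · exact zero_ne_one (show (0:ℂ) = 1 by linear_combination E000 - F2 (e 0) 0 * hZ)

lemma L24 : ¬ ∃ F1 F2 F3 : (Fin 2 → ℂ) ≃ₗ[ℂ] (Fin 2 → ℂ),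
    map3 F1.toLinearMap F2.toLinearMap F3.toLinearMap (canonical3 2) = canonical3 4 := by
  rintro ⟨F1, F2, F3, h⟩
  rw [c2, c4] at h
  have E000 := congrArg (κ 0 0 0) h; simp at E000
  have E010 := congrArg (κ 0 1 0) h; simp at E010
  have E111 := congrArg (κ 1 1 1) h; simp at E111
  have h0 : F2 (e 0) 1 * (F1 (e 0) 0 * F3 (e 0) 0 + F1 (e 1) 0 * F3 (e 1) 0) = 0 := by
    linear_combination E010
  rcases mul_eq_zero.mp h0 with hq | hZ
  · simp [hq] at E111
  · exact zero_ne_one (show (0:ℂ) = 1 by linear_combination E000 - F2 (e 0) 0 * hZ)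

lemma L25 : ¬ ∃ F1 F2 F3 : (Fin 2 → ℂ) ≃ₗ[ℂ] (Fin 2 → ℂ),
    map3 F1.toLinearMap F2.toLinearMap F3.toLinearMap (canonical3 2) = canonical3 5 := by
  rintro ⟨F1, F2, F3, h⟩
  rw [c2, c5] at h
  have E000 := congrArg (κ 0 0 0) h; simp at E000
  have E001 := congrArg (κ 0 0 1) h; simp at E001
  have E010 := congrArg (κ 0 1 0) h; simp at E010
  have h0 : F2 (e 0) 0 * (F1 (e 0) 0 * F3 (e 0) 0 + F1 (e 1) 0 * F3 (e 1) 0) = 0 := by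
    linear_combination E000
  rcases mul_eq_zero.mp h0 with hq | hZ
  · simp [hq] at E001
  · exact zero_ne_one (show (0:ℂ) = 1 by linear_combination E010 - F2 (e 0) 1 * hZ)

lemma L34 : ¬ ∃ F1 F2 F3 : (Fin 2 → ℂ) ≃ₗ[ℂ] (Fin 2 → ℂ),
    map3 F1.toLinearMap F2.toLinearMap F3.toLinearMap (canonical3 3) = canonical3 4 := by
  rintro ⟨F1, F2, F3, h⟩
  rw [c3, c4] at h
  have E000 := congrArg (κ 0 0 0) h; simp at E000
  have E001 := congrArg (κ 0 0 1) h; simp at E001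
  have E111 := congrArg (κ 1 1 1) h; simp at E111
  have h0 : F3 (e 0) 1 * (F1 (e 0) 0 * F2 (e 0) 0 + F1 (e 1) 0 * F2 (e 1) 0) = 0 := by
    linear_combination E001
  rcases mul_eq_zero.mp h0 with hr | hW
  · simp [hr] at E111
  · exact zero_ne_one (show (0:ℂ) = 1 by linear_combination E000 - F3 (e 0) 0 * hW)

lemma L35 : ¬ ∃ F1 F2 F3 : (Fin 2 → ℂ) ≃ₗ[ℂ] (Fin 2 → ℂ),
    map3 F1.toLinearMap F2.toLinearMap F3.toLinearMap (canonical3 3) = canonical3 5 := by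
  rintro ⟨F1, F2, F3, h⟩
  rw [c3, c5] at h
  have E000 := congrArg (κ 0 0 0) h; simp at E000
  have E001 := congrArg (κ 0 0 1) h; simp at E001
  have E010 := congrArg (κ 0 1 0) h; simp at E010
  have h0 : F3 (e 0) 0 * (F1 (e 0) 0 * F2 (e 0) 0 + F1 (e 1) 0 * F2 (e 1) 0) = 0 := by
    linear_combination E000
  rcases mul_eq_zero.mp h0 with hr | hW
  · simp [hr] at E010
  · exact zero_ne_one (show (0:ℂ) = 1 by linear_combination E001 - F3 (e 0) 1 * hW)

lemma L45 : ¬ ∃ F1 F2 F3 : (Fin 2 → ℂ) ≃ₗ[ℂ] (Fin 2 → ℂ),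
    map3 F1.toLinearMap F2.toLinearMap F3.toLinearMap (canonical3 4) = canonical3 5 := by
  rintro ⟨F1, F2, F3, h⟩
  rw [c4, c5] at h
  have E000 := congrArg (κ 0 0 0) h; simp at E000
  have E001 := congrArg (κ 0 0 1) h; simp at E001
  have E010 := congrArg (κ 0 1 0) h; simp at E010
  have E011 := congrArg (κ 0 1 1) h; simp at E011
  have E100 := congrArg (κ 1 0 0) h; simp at E100
  have E101 := congrArg (κ 1 0 1) h; simp at E101
  have E110 := congrArg (κ 1 1 0) h; simp at E110
  have E111 := congrArg (κ 1 1 1) h; simp at E111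
  have hk := hyperdet_key (F1 (e 0) 0) (F1 (e 1) 0) (F1 (e 0) 1) (F1 (e 1) 1)
    (F2 (e 0) 0) (F2 (e 1) 0) (F2 (e 0) 1) (F2 (e 1) 1)
    (F3 (e 0) 0) (F3 (e 1) 0) (F3 (e 0) 1) (F3 (e 1) 1)
    0 1 1 0 1 0 0 0
    E000.symm E001.symm E010.symm E011.symm E100.symm E101.symm E110.symm E111.symm
  norm_num at hk
  have hz : (F1 (e 0) 0 * F1 (e 1) 1 - F1 (e 1) 0 * F1 (e 0) 1)
      * (F2 (e 0) 0 * F2 (e 1) 1 - F2 (e 1) 0 * F2 (e 0) 1)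
      * (F3 (e 0) 0 * F3 (e 1) 1 - F3 (e 1) 0 * F3 (e 0) 1) = 0 :=
    pow_eq_zero_iff (two_ne_zero) |>.mp hk.symm
  rcases mul_eq_zero.mp hz with h12 | h3
  · rcases mul_eq_zero.mp h12 with h1 | h2
    · exact det_ne F1 h1
    · exact det_ne F2 h2
  · exact det_ne F3 h3

end Cases

theorem canonical_three_qubit_states_pairwise_inequivalent
    (i j : Fin 6) (hij : canonical3 i ≠ canonical3 j) :
    ¬ ∃ F1 F2 F3 : (Fin 2 → ℂ) ≃ₗ[ℂ] (Fin 2 → ℂ),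
        map3 F1.toLinearMap F2.toLinearMap F3.toLinearMap (canonical3 i) = canonical3 j := by
  fin_cases i <;> fin_cases j
  · exact absurd rfl hij
  · exact L01
  · exact L02
  · exact L03
  · exact L04
  · exact L05
  · exact fun hE => L01 (slocc_flip hE)
  · exact absurd rfl hij
  · exact L12
  · exact L13
  · exact L14
  · exact L15
  · exact fun hE => L02 (slocc_flip hE)
  · exact fun hE => L12 (slocc_flip hE)
  · exact absurd rfl hij
  · exact L23
  · exact L24
  · exact L25
  · exact fun hE => L03 (slocc_flip hE)
  · exact fun hE => L13 (slocc_flip hE)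
  · exact fun hE => L23 (slocc_flip hE)
  · exact absurd rfl hij
  · exact L34
  · exact L35
  · exact fun hE => L04 (slocc_flip hE)
  · exact fun hE => L14 (slocc_flip hE)
  · exact fun hE => L24 (slocc_flip hE)
  · exact fun hE => L34 (slocc_flip hE)
  · exact absurd rfl hij
  · exact L45
  · exact fun hE => L05 (slocc_flip hE)
  · exact fun hE => L15 (slocc_flip hE)
  · exact fun hE => L25 (slocc_flip hE)
  · exact fun hE => L35 (slocc_flip hE)
  · exact fun hE => L45 (slocc_flip hE)
  · exact absurd rfl hij
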